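/- Let P be a program over 𝒰 and A, B ⊆ 𝒰. If P satisfies Δʳ (for A, B) and does not satisfy criterion Ω_{A,B}, then P is B-relativized A-simplifiable. -/

import Mathlib

/-- An extended rule over a type of atoms: head, positive body, negative body,
double-negated body. -/
structure ASPRule (Atom : Type) where
  head : Finset Atom
  pos : Finset Atom
  neg : Finset Atom
  nneg : Finset Atom
deriving DecidableEq

/-- A program is a finite set of rules. -/
abbrev ASPProgram (Atom : Type) [DecidableEq Atom] := Finset (ASPRule Atom)

section Defs

variable {Atom : Type} [DecidableEq Atom] [Fintype Atom]

/-- A rule is over `S` if all its atoms lie in `S`. -/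
def ruleOver (r : ASPRule Atom) (S : Finset Atom) : Prop :=
  r.head ⊆ S ∧ r.pos ⊆ S ∧ r.neg ⊆ S ∧ r.nneg ⊆ S

/-- A program is over `S` if all its rules are over `S`. -/
def progOver (P : ASPProgram Atom) (S : Finset Atom) : Prop :=
  ∀ r ∈ P, ruleOver r S

/-- `I` satisfies (is a model of) rule `r`. -/
def satRule (I : Finset Atom) (r : ASPRule Atom) : Prop :=
  ((r.head ∪ r.neg) ∩ I).Nonempty ∨ ¬ (r.pos ∪ r.nneg ⊆ I)

/-- `I` is a model of program `P`. -/
def sat (I : Finset Atom) (P : ASPProgram Atom) : Prop :=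
  ∀ r ∈ P, satRule I r

/-- The GL-reduct `P^I`. -/
def reduct (P : ASPProgram Atom) (I : Finset Atom) : ASPProgram Atom :=
  (P.filter (fun r => r.neg ∩ I = ∅ ∧ r.nneg ⊆ I)).image
    (fun r => ⟨r.head, r.pos, ∅, ∅⟩)

/-- The answer sets of `P`: minimal models of the reduct. -/
def AS (P : ASPProgram Atom) : Set (Finset Atom) :=
  {I | sat I (reduct P I) ∧ ∀ J ⊂ I, ¬ sat J (reduct P I)}

/-- Projection of a program onto `𝒰 ∖ A`: rules with a head or negative-body atom
from `A` are dropped; in the remaining rules the atoms of `A` are removed from the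
positive and double-negated bodies. -/
def projAway (P : ASPProgram Atom) (A : Finset Atom) : ASPProgram Atom :=
  (P.filter (fun r => r.neg ∩ A = ∅ ∧ r.head ∩ A = ∅)).image
    (fun r => ⟨r.head, r.pos \ A, r.neg, r.nneg \ A⟩)

/-- `R` is `A`-separated: a union of a program over `𝒰 ∖ A` and a program over `A`. -/
def ASeparated (R : ASPProgram Atom) (A : Finset Atom) : Prop :=
  ∃ R₁ R₂ : ASPProgram Atom, R = R₁ ∪ R₂ ∧ progOver R₁ Aᶜ ∧ progOver R₂ A

/-- The defining equation of a (strong) `A`-simplification of `P` relative to `B`: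
`AS(P ∪ R)_{|Ā} = AS(Q ∪ R_{|Ā})` for every `A`-separated program `R` over `B`. -/
def SimpEq (P : ASPProgram Atom) (A B : Finset Atom) (Q : ASPProgram Atom) : Prop :=
  ∀ R : ASPProgram Atom, progOver R B → ASeparated R A →
    (fun I => I \ A) '' AS (P ∪ R) = AS (Q ∪ projAway R A)

/-- The SE-models of `P`. -/
def SE (P : ASPProgram Atom) : Set (Finset Atom × Finset Atom) :=
  {p | p.1 ⊆ p.2 ∧ sat p.2 P ∧ sat p.1 (reduct P p.2)}

/-- The (relativized) `B`-SE-models of `P`. -/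
def SEB (B : Finset Atom) (P : ASPProgram Atom) : Set (Finset Atom × Finset Atom) :=
  {p | (p.1 = p.2 ∨ p.1 ⊂ p.2 ∩ B) ∧ sat p.2 P ∧
    (∀ Y' ⊂ p.2, Y' ∩ B = p.2 ∩ B → ¬ sat Y' (reduct P p.2)) ∧
    (p.1 ⊂ p.2 → ∃ X' ⊆ p.2, X' ∩ B = p.1 ∧ sat X' (reduct P p.2))}

/-- `SE^{A₁,A₂}(P)`: the `A₂`-SE-models `⟨X,Y⟩` of `P` with `Y ⊆ A₁`. -/
def SERel (P : ASPProgram Atom) (A₁ A₂ : Finset Atom) : Set (Finset Atom × Finset Atom) :=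
  {p | p ∈ SEB A₂ P ∧ p.2 ⊆ A₁}

/-- `P` satisfies `Δʳ` for `A`, `B`. -/
def DeltaR (P : ASPProgram Atom) (A B : Finset Atom) : Prop :=
  (∀ Y : Finset Atom, (Y, Y) ∈ SEB B P → A ∩ B ⊆ Y) ∧
  (∀ X Y : Finset Atom, (X, Y) ∈ SE P → (Y, Y) ∈ SEB B P → X \ A = Y \ A → X = Y) ∧
  (∀ X Y : Finset Atom, (X, Y) ∈ SEB B P → (X ∪ (Y ∩ A ∩ B), Y) ∈ SEB B P)

/-- The family `𝓡^Y_{⟨P,A,B⟩}`. -/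
def RFam (P : ASPProgram Atom) (A B Y : Finset Atom) : Set (Set (Finset Atom)) :=
  {S | ∃ A' ⊆ A, (Y ∪ A', Y ∪ A') ∈ SEB B P ∧
    S = {Z | ∃ X : Finset Atom, (X, Y ∪ A') ∈ SEB B P ∧ Z = X \ A}}

/-- `P` satisfies criterion `Ω_{A,B}`: for some `Y ⊆ 𝒰 ∖ A` the family
`𝓡^Y_{⟨P,A,B⟩}` is non-empty and has no `⊆`-least element. -/
def OmegaCrit (P : ASPProgram Atom) (A B : Finset Atom) : Prop :=
  ∃ Y : Finset Atom, Y ⊆ Aᶜ ∧ (RFam P A B Y).Nonempty ∧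
    ¬ ∃ S ∈ RFam P A B Y, ∀ T ∈ RFam P A B Y, S ⊆ T

/-- `⋂ 𝓡^Y_{⟨P,A,B⟩}`, taken to be `∅` when the family is empty. -/
def RInter (P : ASPProgram Atom) (A B Y : Finset Atom) : Set (Finset Atom) :=
  {X | (RFam P A B Y).Nonempty ∧ ∀ S ∈ RFam P A B Y, X ∈ S}

/-- The `A`-`B`-SE-models `SE^B_A(P)` of `P`. -/
def SEBA (P : ASPProgram Atom) (A B : Finset Atom) : Set (Finset Atom × Finset Atom) :=
  {p | ∃ Y : Finset Atom, (Y, Y) ∈ SEB B P ∧ p = (Y \ A, Y \ A)} ∪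
  {p | ∃ X Y : Finset Atom, (X, Y) ∈ SEB B P ∧ X ⊂ Y ∧
    (∀ Y' : Finset Atom, (Y', Y') ∈ SEB B P → Y' \ A = Y \ A →
      ∃ X' : Finset Atom, (X', Y') ∈ SEB B P ∧ X' \ A = X \ A) ∧
    p = (X \ A, Y \ A)}

end Defs

/-!
For `R` over `B`, the answer sets of `P ∪ R` are read off the `B`-SE-models of `P`: `Y` is one
iff `⟨Y, Y⟩ ∈ SE^B(P)`, `Y ⊨ R`, and no `⟨X, Y⟩ ∈ SE^B(P)` with `X ⊊ Y ∩ B` satisfies `R^Y`.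
Split `R = R₁ ∪ R₂` with `R₁` over `Ā` and `R₂` over `A ∩ B`. By `Δʳ_{s1}` every such `Y`
contains `A ∩ B`, so either `R₂` has a constraint, and there are no answer sets on either side,
or `R₂` holds outright; by `Δʳ_{s3}` it can then be dropped from the minimality test as well.
Projecting away `A`, the sets `X ∖ A` form a member of `𝓡^{Y ∖ A}`. Since `Ω_{A,B}` fails, a
non-empty such family has a least member, namely its intersection, and `Q` is the program whose
reduct w.r.t. `Z` has exactly the models of that intersection on `Ā`. Finally `Δʳ_{s2}` ensures
that no counter-model `X ⊊ Y ∩ B` projects onto `Y ∖ A`.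
-/

lemma Finset.sdiff_subset_compl {α : Type*} [DecidableEq α] [Fintype α] (s t : Finset α) :
    s \ t ⊆ tᶜ := by
  rw [Finset.sdiff_eq_inter_compl]
  exact Finset.inter_subset_right

lemma Finset.sdiff_eq_self_of_subset_compl {α : Type*} [DecidableEq α] [Fintype α]
    {s t : Finset α} (h : s ⊆ tᶜ) : s \ t = s :=
  Finset.sdiff_eq_self_of_disjoint (Finset.subset_compl_iff_disjoint_right.1 h)

section Simplification

variable {Atom : Type} [DecidableEq Atom]

lemma inter_eq_inter_of_subset {S T I J : Finset Atom} (h : I ∩ S = J ∩ S) (hT : T ⊆ S) :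
    T ∩ I = T ∩ J := by
  ext a
  have haS := @hT a
  have hIJ := Finset.ext_iff.1 h a
  simp only [Finset.mem_inter] at hIJ ⊢
  tauto

lemma subset_iff_of_inter_eq {S T I J : Finset Atom} (h : I ∩ S = J ∩ S) (hT : T ⊆ S) :
    T ⊆ I ↔ T ⊆ J := by
  rw [← Finset.inter_eq_left, ← Finset.inter_eq_left (t := J), inter_eq_inter_of_subset h hT]

lemma compl_sdiff_inter_eq_empty_and_subset_iff [Fintype Atom] {A Z I : Finset Atom}
    (hZ : Z ⊆ Aᶜ) : (Aᶜ \ Z) ∩ I = ∅ ∧ Z ⊆ I ↔ Z = I \ A := by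
  simp only [Finset.ext_iff, Finset.subset_iff, Finset.mem_inter, Finset.mem_sdiff,
    Finset.mem_compl, Finset.notMem_empty, iff_false] at hZ ⊢
  grind

lemma union_sdiff_eq_of_subset_compl [Fintype Atom] {A A' Z : Finset Atom} (hZ : Z ⊆ Aᶜ)
    (hA' : A' ⊆ A) : (Z ∪ A') \ A = Z := by
  rw [Finset.union_sdiff_distrib, Finset.sdiff_eq_empty_iff_subset.2 hA', Finset.union_empty,
    Finset.sdiff_eq_self_of_subset_compl hZ]

lemma satRule_congr {r : ASPRule Atom} {S I J : Finset Atom} (hr : ruleOver r S)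
    (h : I ∩ S = J ∩ S) : satRule I r ↔ satRule J r := by
  obtain ⟨hh, hp, hn, hnn⟩ := hr
  unfold satRule
  rw [inter_eq_inter_of_subset h (Finset.union_subset hh hn),
    subset_iff_of_inter_eq h (Finset.union_subset hp hnn)]

lemma sat_congr {T : ASPProgram Atom} {S I J : Finset Atom} (hT : progOver T S)
    (h : I ∩ S = J ∩ S) : sat I T ↔ sat J T :=
  forall₂_congr fun r hr => satRule_congr (hT r hr) h

lemma reduct_congr {T : ASPProgram Atom} {S I J : Finset Atom} (hT : progOver T S)
    (h : I ∩ S = J ∩ S) : reduct T I = reduct T J := by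
  unfold reduct
  congr 1
  refine Finset.filter_congr fun r hr => ?_
  obtain ⟨-, -, hn, hnn⟩ := hT r hr
  rw [inter_eq_inter_of_subset h hn, subset_iff_of_inter_eq h hnn]

lemma sat_sdiff_iff [Fintype Atom] {T : ASPProgram Atom} {A I : Finset Atom}
    (hT : progOver T Aᶜ) : sat (I \ A) T ↔ sat I T :=
  sat_congr hT (by rw [Finset.sdiff_eq_inter_compl, Finset.inter_assoc, Finset.inter_self])

lemma reduct_sdiff [Fintype Atom] {T : ASPProgram Atom} {A I : Finset Atom}
    (hT : progOver T Aᶜ) : reduct T (I \ A) = reduct T I :=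
  reduct_congr hT (by rw [Finset.sdiff_eq_inter_compl, Finset.inter_assoc, Finset.inter_self])

lemma mem_reduct {P : ASPProgram Atom} {I : Finset Atom} {r' : ASPRule Atom} :
    r' ∈ reduct P I ↔
      ∃ r ∈ P, (r.neg ∩ I = ∅ ∧ r.nneg ⊆ I) ∧ ⟨r.head, r.pos, ∅, ∅⟩ = r' := by
  simp only [reduct, Finset.mem_image, Finset.mem_filter, and_assoc]

lemma sat_reduct_iff {P : ASPProgram Atom} {X Y : Finset Atom} :
    sat X (reduct P Y) ↔ ∀ r ∈ P, r.neg ∩ Y = ∅ → r.nneg ⊆ Y →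
      (r.head ∩ X).Nonempty ∨ ¬ r.pos ⊆ X := by
  simp only [sat, reduct, Finset.forall_mem_image, Finset.mem_filter, and_imp, satRule,
    Finset.union_empty]

lemma sat_reduct_self_iff {P : ASPProgram Atom} {I : Finset Atom} :
    sat I (reduct P I) ↔ sat I P := by
  rw [sat_reduct_iff]
  refine forall₂_congr fun r _ => ?_
  simp only [satRule, Finset.union_inter_distrib_right, Finset.union_subset_iff,
    Finset.nonempty_iff_ne_empty, ne_eq, Finset.union_eq_empty]
  tauto

lemma reduct_union {P R : ASPProgram Atom} {I : Finset Atom} :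
    reduct (P ∪ R) I = reduct P I ∪ reduct R I := by
  simp only [reduct, Finset.filter_union, Finset.image_union]

lemma sat_union {P R : ASPProgram Atom} {I : Finset Atom} :
    sat I (P ∪ R) ↔ sat I P ∧ sat I R := by
  simp only [sat, Finset.mem_union, or_imp, forall_and]

lemma progOver_union {T₁ T₂ : ASPProgram Atom} {S : Finset Atom}
    (h₁ : progOver T₁ S) (h₂ : progOver T₂ S) : progOver (T₁ ∪ T₂) S := by
  intro r hr
  rcases Finset.mem_union.mp hr with hr | hr
  exacts [h₁ r hr, h₂ r hr]

lemma progOver_inter {T : ASPProgram Atom} {S S' : Finset Atom}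
    (h : progOver T S) (h' : progOver T S') : progOver T (S ∩ S') := by
  intro r hr
  obtain ⟨h₁, h₂, h₃, h₄⟩ := h r hr
  obtain ⟨h₁', h₂', h₃', h₄'⟩ := h' r hr
  exact ⟨Finset.subset_inter h₁ h₁', Finset.subset_inter h₂ h₂',
    Finset.subset_inter h₃ h₃', Finset.subset_inter h₄ h₄'⟩

lemma progOver_reduct {T : ASPProgram Atom} {S I : Finset Atom} (hT : progOver T S) :
    progOver (reduct T I) S := by
  intro r' hr'
  obtain ⟨r, hr, -, rfl⟩ := mem_reduct.mp hr'
  obtain ⟨h₁, h₂, -, -⟩ := hT r hr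
  exact ⟨h₁, h₂, Finset.empty_subset _, Finset.empty_subset _⟩

lemma subset_of_mem_AS {T : ASPProgram Atom} {S I : Finset Atom} (hT : progOver T S)
    (hI : I ∈ AS T) : I ⊆ S := by
  have hsat : sat (I ∩ S) (reduct T I) :=
    (sat_congr (progOver_reduct hT) (by rw [Finset.inter_assoc, Finset.inter_self])).mp hI.1
  by_contra hIS
  exact hI.2 _ (Finset.ssubset_iff_subset_ne.2 ⟨Finset.inter_subset_left,
    fun h => hIS (h ▸ Finset.inter_subset_right)⟩) hsat

lemma AS_eq_empty_of_empty_rule_mem {T : ASPProgram Atom} (hT : ⟨∅, ∅, ∅, ∅⟩ ∈ T) :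
    AS T = ∅ := by
  refine Set.eq_empty_of_forall_notMem fun I hI => ?_
  have := sat_reduct_self_iff.mp hI.1 _ hT
  simp [satRule] at this

lemma mem_SEB {P : ASPProgram Atom} {B X Y : Finset Atom} :
    (X, Y) ∈ SEB B P ↔ (X = Y ∨ X ⊂ Y ∩ B) ∧ sat Y P ∧
      (∀ Y' ⊂ Y, Y' ∩ B = Y ∩ B → ¬ sat Y' (reduct P Y)) ∧
      (X ⊂ Y → ∃ X' ⊆ Y, X' ∩ B = X ∧ sat X' (reduct P Y)) :=
  Iff.rfl

def IsSEBAnswerSet (P R : ASPProgram Atom) (B Y : Finset Atom) : Prop :=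
  (Y, Y) ∈ SEB B P ∧ sat Y R ∧
    ∀ X, (X, Y) ∈ SEB B P → X ⊂ Y ∩ B → ¬ sat X (reduct R Y)

lemma mem_AS_union_iff {P R : ASPProgram Atom} {B Y : Finset Atom} (hR : progOver R B) :
    Y ∈ AS (P ∪ R) ↔ IsSEBAnswerSet P R B Y := by
  have hRY : progOver (reduct R Y) B := progOver_reduct hR
  simp only [AS, Set.mem_ofPred_eq, reduct_union, sat_union, sat_reduct_self_iff]
  constructor
  · rintro ⟨⟨hYP, hYR⟩, hmin⟩
    refine ⟨⟨Or.inl rfl, hYP, fun Y' hY' hB hY'P => hmin Y' hY' ⟨hY'P, ?_⟩,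
      fun h => absurd h (lt_irrefl Y)⟩, hYR, fun X hX hXY hXR => ?_⟩
    · exact (sat_congr hRY hB).2 (sat_reduct_self_iff.2 hYR)
    obtain ⟨X', hX'Y, hX'B, hX'P⟩ := (mem_SEB.1 hX).2.2.2 (hXY.trans_le Finset.inter_subset_left)
    have hXB : X ∩ B = X := Finset.inter_eq_left.2 (hXY.le.trans Finset.inter_subset_right)
    refine hmin X' (Finset.ssubset_iff_subset_ne.2 ⟨hX'Y, ?_⟩) ⟨hX'P, ?_⟩
    · rintro rfl
      exact hXY.ne hX'B.symm
    · exact (sat_congr hRY (by rw [hX'B, hXB])).2 hXR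
  · rintro ⟨hYY, hYR, hno⟩
    obtain ⟨-, hYP, hYmin, -⟩ := mem_SEB.1 hYY
    refine ⟨⟨hYP, hYR⟩, ?_⟩
    rintro J hJY ⟨hJP, hJR⟩
    have hJB : J ∩ B ⊆ Y ∩ B := Finset.inter_subset_inter_right hJY.le
    rcases hJB.eq_or_ssubset with hJB | hJB
    · exact hYmin J hJY hJB hJP
    · refine hno (J ∩ B) ⟨Or.inr hJB, hYP, hYmin, fun _ => ⟨J, hJY.le, rfl, hJP⟩⟩ hJB ?_
      exact (sat_congr hRY (by rw [Finset.inter_assoc, Finset.inter_self])).1 hJR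

lemma DeltaR.sdiff_ne {P : ASPProgram Atom} {A B X Y : Finset Atom} (h : DeltaR P A B)
    (hY : (Y, Y) ∈ SEB B P) (hX : (X, Y) ∈ SEB B P) (hXY : X ⊂ Y ∩ B) : X \ A ≠ Y \ A := by
  intro hXA
  obtain ⟨X', hX'Y, hX'B, hX'P⟩ := (mem_SEB.1 hX).2.2.2 (hXY.trans_le Finset.inter_subset_left)
  have hX'A : X' \ A = Y \ A := by
    refine le_antisymm (Finset.sdiff_subset_sdiff hX'Y le_rfl) ?_
    rw [← hXA, ← hX'B]
    exact Finset.sdiff_subset_sdiff Finset.inter_subset_left le_rfl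
  obtain rfl := h.2.1 X' Y ⟨hX'Y, hY.2.1, hX'P⟩ hY hX'A
  exact hXY.ne hX'B.symm

lemma DeltaR.union_inter_mem_SEB {P : ASPProgram Atom} {A B X Y : Finset Atom}
    (h : DeltaR P A B) (hY : (Y, Y) ∈ SEB B P) (hX : (X, Y) ∈ SEB B P) (hXY : X ⊂ Y ∩ B) :
    (X ∪ A ∩ B, Y) ∈ SEB B P ∧ X ∪ A ∩ B ⊂ Y ∩ B := by
  have hXhat : (X ∪ A ∩ B, Y) ∈ SEB B P := by
    simpa only [Finset.inter_assoc, Finset.inter_eq_right.2 (h.1 Y hY)] using h.2.2 X Y hX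
  refine ⟨hXhat, (mem_SEB.1 hXhat).1.resolve_left fun hXY' => h.sdiff_ne hY hX hXY ?_⟩
  rw [← hXY', Finset.union_sdiff_distrib, Finset.sdiff_eq_empty_iff_subset.2
    Finset.inter_subset_left, Finset.union_empty]

lemma sat_reduct_of_subset {R : ASPProgram Atom} {S X Y : Finset Atom} (hR : progOver R S)
    (hR' : ∀ r ∈ R, r.head = ∅ → r.neg.Nonempty) (hSY : S ⊆ Y) (hSX : S ⊆ X) :
    sat X (reduct R Y) := by
  refine sat_reduct_iff.2 fun r hr hneg _ => Or.inl ?_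
  obtain ⟨hh, -, hn, -⟩ := hR r hr
  obtain ⟨a, ha⟩ : r.head.Nonempty := by
    refine Finset.nonempty_iff_ne_empty.2 fun hh' => ?_
    obtain ⟨b, hb⟩ := hR' r hr hh'
    exact Finset.notMem_empty b (hneg ▸ Finset.mem_inter.2 ⟨hb, hSY (hn hb)⟩)
  exact ⟨a, Finset.mem_inter.2 ⟨ha, hSX (hh ha)⟩⟩

lemma isSEBAnswerSet_union_iff [Fintype Atom] {P R₁ R₂ : ASPProgram Atom}
    {A B Y : Finset Atom} (h : DeltaR P A B) (hR₁ : progOver R₁ Aᶜ)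
    (hR₂ : progOver R₂ (A ∩ B)) (hR₂' : ∀ r ∈ R₂, r.head = ∅ → r.neg.Nonempty) :
    IsSEBAnswerSet P (R₁ ∪ R₂) B Y ↔ IsSEBAnswerSet P R₁ B Y := by
  simp only [IsSEBAnswerSet, reduct_union, sat_union]
  refine and_congr_right fun hY => ?_
  have hR₂red : ∀ X, A ∩ B ⊆ X → sat X (reduct R₂ Y) :=
    fun X => sat_reduct_of_subset hR₂ hR₂' (h.1 Y hY)
  have hYR₂ : sat Y R₂ := sat_reduct_self_iff.1 (hR₂red Y (h.1 Y hY))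
  simp only [hYR₂, and_true]
  refine and_congr_right fun _ => ⟨fun hno X hX hXY hXR₁ => ?_, fun hno X hX hXY hXR => ?_⟩
  · obtain ⟨hXhat, hXYhat⟩ := h.union_inter_mem_SEB hY hX hXY
    refine hno _ hXhat hXYhat ⟨?_, hR₂red _ Finset.subset_union_right⟩
    rw [← sat_sdiff_iff (progOver_reduct hR₁), Finset.union_sdiff_distrib,
      Finset.sdiff_eq_empty_iff_subset.2 Finset.inter_subset_left, Finset.union_empty,
      sat_sdiff_iff (progOver_reduct hR₁)]
    exact hXR₁
  · exact hno X hX hXY hXR.1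

lemma AS_union_eq_empty_of_constraint {P R : ASPProgram Atom} {A B : Finset Atom}
    {r : ASPRule Atom} (h : DeltaR P A B) (hR : progOver R B) (hr : r ∈ R)
    (hrA : ruleOver r A) (hh : r.head = ∅) (hn : r.neg = ∅) : AS (P ∪ R) = ∅ := by
  refine Set.eq_empty_of_forall_notMem fun Y hY => ?_
  obtain ⟨hYY, hYR, -⟩ := (mem_AS_union_iff hR).1 hY
  have hAB : r.pos ∪ r.nneg ⊆ A ∩ B :=
    Finset.union_subset (Finset.subset_inter hrA.2.1 (hR r hr).2.1)
      (Finset.subset_inter hrA.2.2.2 (hR r hr).2.2.2)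
  have := hYR r hr
  simp only [satRule, hh, hn, Finset.empty_union, Finset.empty_inter,
    Finset.not_nonempty_empty, false_or] at this
  exact this (hAB.trans (h.1 Y hYY))

lemma empty_rule_mem_projAway {R : ASPProgram Atom} {A : Finset Atom} {r : ASPRule Atom}
    (hr : r ∈ R) (hrA : ruleOver r A) (hh : r.head = ∅) (hn : r.neg = ∅) :
    ⟨∅, ∅, ∅, ∅⟩ ∈ projAway R A := by
  refine Finset.mem_image.2 ⟨r, Finset.mem_filter.2 ⟨hr, by simp [hh, hn]⟩, ?_⟩
  rw [hh, hn, Finset.sdiff_eq_empty_iff_subset.2 hrA.2.1,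
    Finset.sdiff_eq_empty_iff_subset.2 hrA.2.2.2]

lemma projAway_union_eq [Fintype Atom] {R₁ R₂ : ASPProgram Atom} {A : Finset Atom}
    (hR₁ : progOver R₁ Aᶜ) (hR₂ : progOver R₂ A)
    (hR₂' : ∀ r ∈ R₂, r.head = ∅ → r.neg.Nonempty) : projAway (R₁ ∪ R₂) A = R₁ := by
  ext r
  simp only [projAway, Finset.mem_image, Finset.mem_filter, Finset.mem_union]
  constructor
  · rintro ⟨s, ⟨hs | hs, hsn, hsh⟩, rfl⟩
    · obtain ⟨-, hp, -, hnn⟩ := hR₁ s hs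
      rwa [Finset.sdiff_eq_self_of_subset_compl hp, Finset.sdiff_eq_self_of_subset_compl hnn]
    · obtain ⟨hh, -, hn, -⟩ := hR₂ s hs
      rw [Finset.inter_eq_left.2 hh] at hsh
      rw [Finset.inter_eq_left.2 hn] at hsn
      exact absurd hsn (hR₂' s hs hsh).ne_empty
  · intro hr
    obtain ⟨hh, hp, hn, hnn⟩ := hR₁ r hr
    have hinter : ∀ {T : Finset Atom}, T ⊆ Aᶜ → T ∩ A = ∅ := fun hT =>
      Finset.disjoint_iff_inter_eq_empty.1 (Finset.subset_compl_iff_disjoint_right.1 hT)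
    refine ⟨r, ⟨Or.inl hr, hinter hn, hinter hh⟩, ?_⟩
    rw [Finset.sdiff_eq_self_of_subset_compl hp, Finset.sdiff_eq_self_of_subset_compl hnn]

lemma sdiff_mem_RFam {P : ASPProgram Atom} {A B Y : Finset Atom} (hY : (Y, Y) ∈ SEB B P) :
    {W | ∃ X, (X, Y) ∈ SEB B P ∧ W = X \ A} ∈ RFam P A B (Y \ A) := by
  refine ⟨Y ∩ A, Finset.inter_subset_right, ?_, ?_⟩ <;> rw [Finset.sdiff_union_inter]
  exact hY

variable [Fintype Atom]

lemma mem_of_mem_RFam {P : ASPProgram Atom} {A B Z : Finset Atom} {S : Set (Finset Atom)}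
    (hZ : Z ⊆ Aᶜ) (hS : S ∈ RFam P A B Z) : Z ∈ S := by
  obtain ⟨A', hA', hY, rfl⟩ := hS
  exact ⟨Z ∪ A', hY, (union_sdiff_eq_of_subset_compl hZ hA').symm⟩

lemma exists_RInter_eq {P : ASPProgram Atom} {A B Z : Finset Atom} (h : ¬ OmegaCrit P A B)
    (hZ : Z ⊆ Aᶜ) (hne : (RFam P A B Z).Nonempty) :
    ∃ A' ⊆ A, (Z ∪ A', Z ∪ A') ∈ SEB B P ∧
      RInter P A B Z = {W | ∃ X, (X, Z ∪ A') ∈ SEB B P ∧ W = X \ A} := by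
  obtain ⟨S, hS, hleast⟩ : ∃ S ∈ RFam P A B Z, ∀ T ∈ RFam P A B Z, S ⊆ T := by
    by_contra hno
    exact h ⟨Z, hZ, hne, hno⟩
  obtain ⟨A', hA', hY, rfl⟩ := hS
  exact ⟨A', hA', hY, Set.ext fun W =>
    ⟨fun hW => hW.2 _ ⟨A', hA', hY, rfl⟩, fun hW => ⟨hne, fun T hT => hleast T hT hW⟩⟩⟩

open Classical in
/-- The rule for `(Z, N)` survives the reduct w.r.t. `I` iff `Z = I \ A`, and then it is
violated by exactly the `V` with `V \ A = N`. -/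
noncomputable def reductModelsProgram (A : Finset Atom) (M : Finset Atom → Set (Finset Atom)) :
    ASPProgram Atom :=
  ((Aᶜ.powerset ×ˢ Aᶜ.powerset).filter fun p => p.2 ∉ M p.1).image
    fun p => ⟨Aᶜ \ p.2, p.2, Aᶜ \ p.1, p.1⟩

lemma progOver_reductModelsProgram {A : Finset Atom} {M : Finset Atom → Set (Finset Atom)} :
    progOver (reductModelsProgram A M) Aᶜ := by
  simp only [progOver, reductModelsProgram, Finset.forall_mem_image, Finset.mem_filter,
    Finset.mem_product, Finset.mem_powerset, and_imp, Prod.forall]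
  exact fun Z N hZ hN _ => ⟨Finset.sdiff_subset, hN, Finset.sdiff_subset, hZ⟩

lemma sat_reduct_reductModelsProgram {A I V : Finset Atom}
    {M : Finset Atom → Set (Finset Atom)} :
    sat V (reduct (reductModelsProgram A M) I) ↔ V \ A ∈ M (I \ A) := by
  simp only [sat_reduct_iff, reductModelsProgram, Finset.forall_mem_image, Finset.mem_filter,
    Finset.mem_product, Finset.mem_powerset, and_imp, Prod.forall]
  constructor
  · intro hsat
    by_contra hV
    have hIA := Finset.sdiff_subset_compl I A
    have hVA := Finset.sdiff_subset_compl V A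
    obtain ⟨hIe, hIs⟩ := (compl_sdiff_inter_eq_empty_and_subset_iff (I := I) hIA).2 rfl
    obtain ⟨hVe, hVs⟩ := (compl_sdiff_inter_eq_empty_and_subset_iff (I := V) hVA).2 rfl
    rcases hsat _ _ hIA hVA hV hIe hIs with hne | hns
    · exact Finset.not_nonempty_empty (hVe ▸ hne)
    · exact hns hVs
  · intro hV Z N hZ hN hNM hZI hZI'
    obtain rfl := (compl_sdiff_inter_eq_empty_and_subset_iff hZ).1 ⟨hZI, hZI'⟩
    by_contra hNV
    rw [not_or, Finset.not_nonempty_iff_eq_empty, not_not] at hNV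
    exact hNM ((compl_sdiff_inter_eq_empty_and_subset_iff hN).1 hNV ▸ hV)

lemma mem_AS_reductModelsProgram_union_iff {R : ASPProgram Atom} {A Z : Finset Atom}
    {M : Finset Atom → Set (Finset Atom)} (hR : progOver R Aᶜ) :
    Z ∈ AS (reductModelsProgram A M ∪ R) ↔
      Z ⊆ Aᶜ ∧ Z ∈ M Z ∧ sat Z R ∧ ∀ J ⊂ Z, J ∈ M Z → ¬ sat J (reduct R Z) := by
  have hQR := progOver_union (progOver_reductModelsProgram (M := M)) hR
  suffices h : Z ⊆ Aᶜ → (Z ∈ AS (reductModelsProgram A M ∪ R) ↔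
      Z ∈ M Z ∧ sat Z R ∧ ∀ J ⊂ Z, J ∈ M Z → ¬ sat J (reduct R Z)) from
    ⟨fun hZ => ⟨subset_of_mem_AS hQR hZ, (h (subset_of_mem_AS hQR hZ)).1 hZ⟩,
      fun ⟨hZA, hZ⟩ => (h hZA).2 hZ⟩
  intro hZA
  have hsd : ∀ J ⊆ Z, J \ A = J := fun J hJ =>
    Finset.sdiff_eq_self_of_subset_compl (hJ.trans hZA)
  simp only [AS, Set.mem_ofPred_eq, reduct_union, sat_union, sat_reduct_reductModelsProgram]
  simp only [sat_reduct_self_iff, hsd Z le_rfl, and_assoc]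
  refine and_congr_right fun _ => and_congr_right fun _ => forall₂_congr fun J hJ => ?_
  rw [hsd J hJ.le, not_and]

lemma sdiff_mem_AS_of_isSEBAnswerSet {P R : ASPProgram Atom} {A B Y : Finset Atom}
    (hR : progOver R Aᶜ) (hY : IsSEBAnswerSet P R B Y) :
    Y \ A ∈ AS (reductModelsProgram A (RInter P A B) ∪ R) := by
  obtain ⟨hYY, hYR, hno⟩ := hY
  have hSY := sdiff_mem_RFam (A := A) hYY
  have hYA := Finset.sdiff_subset_compl Y A
  refine (mem_AS_reductModelsProgram_union_iff hR).2 ⟨hYA,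
    ⟨⟨_, hSY⟩, fun S hS => mem_of_mem_RFam hYA hS⟩, (sat_sdiff_iff hR).2 hYR, ?_⟩
  rintro J hJ ⟨-, hJS⟩ hJR
  obtain ⟨X, hX, rfl⟩ := hJS _ hSY
  rcases (mem_SEB.1 hX).1 with rfl | hXY
  · exact hJ.ne rfl
  · exact hno X hX hXY (by rwa [reduct_sdiff hR, sat_sdiff_iff (progOver_reduct hR)] at hJR)

lemma exists_isSEBAnswerSet_of_mem_AS {P R : ASPProgram Atom} {A B Z : Finset Atom}
    (h : DeltaR P A B) (hΩ : ¬ OmegaCrit P A B) (hR : progOver R Aᶜ)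
    (hZ : Z ∈ AS (reductModelsProgram A (RInter P A B) ∪ R)) :
    ∃ Y, IsSEBAnswerSet P R B Y ∧ Y \ A = Z := by
  obtain ⟨hZA, hZM, hZR, hmin⟩ := (mem_AS_reductModelsProgram_union_iff hR).1 hZ
  obtain ⟨A', hA', hY, hM⟩ := exists_RInter_eq hΩ hZA hZM.1
  have hYZ := union_sdiff_eq_of_subset_compl hZA hA'
  refine ⟨Z ∪ A', ⟨hY, ?_, fun X hX hXY hXR => ?_⟩, hYZ⟩
  · rwa [← sat_sdiff_iff hR, hYZ]
  · have hXM : X \ A ∈ RInter P A B Z := hM ▸ ⟨X, hX, rfl⟩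
    have hXZ : X \ A ⊂ Z := Finset.ssubset_iff_subset_ne.2
      ⟨hYZ ▸ Finset.sdiff_subset_sdiff (hXY.le.trans Finset.inter_subset_left) le_rfl,
        hYZ ▸ h.sdiff_ne hY hX hXY⟩
    exact hmin _ hXZ hXM (by rwa [← hYZ, reduct_sdiff hR, sat_sdiff_iff (progOver_reduct hR)])

end Simplification

/-- `Δʳ` together with the failure of `Ω_{A,B}` implies that `P` is
`B`-relativized `A`-simplifiable. -/
theorem stmt7 {Atom : Type} [DecidableEq Atom] [Fintype Atom]
    (P : ASPProgram Atom) (A B : Finset Atom)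
    (h1 : DeltaR P A B) (h2 : ¬ OmegaCrit P A B) :
    ∃ Q : ASPProgram Atom, progOver Q Aᶜ ∧ SimpEq P A B Q := by
  refine ⟨reductModelsProgram A (RInter P A B), progOver_reductModelsProgram, ?_⟩
  rintro R hRB ⟨R₁, R₂, rfl, hR₁, hR₂⟩
  by_cases hcon : ∃ r ∈ R₂, r.head = ∅ ∧ r.neg = ∅
  · obtain ⟨r, hr, hh, hn⟩ := hcon
    have hr' : r ∈ R₁ ∪ R₂ := Finset.mem_union_right _ hr
    rw [AS_union_eq_empty_of_constraint h1 hRB hr' (hR₂ r hr) hh hn, Set.image_empty,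
      AS_eq_empty_of_empty_rule_mem (Finset.mem_union_right _
        (empty_rule_mem_projAway hr' (hR₂ r hr) hh hn))]
  push Not at hcon
  have hR₂AB : progOver R₂ (A ∩ B) :=
    progOver_inter hR₂ fun r hr => hRB r (Finset.mem_union_right _ hr)
  have hAS : AS (P ∪ (R₁ ∪ R₂)) = {Y | IsSEBAnswerSet P R₁ B Y} := Set.ext fun Y =>
    (mem_AS_union_iff hRB).trans (isSEBAnswerSet_union_iff h1 hR₁ hR₂AB hcon)
  rw [projAway_union_eq hR₁ hR₂ hcon, hAS]
  ext Z
  constructor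
  · rintro ⟨Y, hY, rfl⟩
    exact sdiff_mem_AS_of_isSEBAnswerSet hR₁ hY
  · intro hZ
    obtain ⟨Y, hY, rfl⟩ := exists_isSEBAnswerSet_of_mem_AS h1 h2 hR₁ hZ
    exact ⟨Y, hY, rfl⟩
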